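/- arXiv:2011.13296 — 2 statements merged into one kernel-verified Lean document; each statement's English description precedes it below -/
import Mathlib

section
/- Let (x_k)_{k∈ℕ} be a sequence of nonnegative real numbers and let c > 0 be a constant such that the relative stability criterion holds: for every k ∈ ℕ the series ∑_{i=1}^∞ x_{k+i} converges and c · ∑_{i=1}^∞ x_{k+i} ≤ x_k. Then for every k ∈ ℕ and every ε > 0 there exists an integer n with 0 ≤ n ≤ ⌈1/(c·ε)⌉ such that x_{k+n} ≤ ε · x_k. -/
/-! If `x (k + n) > ε * x k` for every `n ≤ N := ⌈1 / (c ε)⌉`, then the first `N` terms of the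
tail after `x k` already sum to more than `N ε x k ≥ x k / c`, contradicting the criterion. -/

open Finset

theorem card_mul_lt_tsum {ι : Type*} {f : ι → ℝ} (hf : Summable f) (hf₀ : ∀ i, 0 ≤ f i)
    {s : Finset ι} (hs : s.Nonempty) {a : ℝ} (ha : ∀ i ∈ s, a < f i) :
    #s * a < ∑' i, f i :=
  calc #s * a = ∑ _i ∈ s, a := by rw [sum_const, nsmul_eq_mul]
    _ < ∑ i ∈ s, f i := sum_lt_sum_of_nonempty hs ha
    _ ≤ ∑' i, f i := hf.sum_le_tsum s fun i _ ↦ hf₀ i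

theorem one_le_mul_natCeil_one_div {a : ℝ} (ha : 0 < a) : 1 ≤ a * ⌈1 / a⌉₊ := by
  calc 1 = a * (1 / a) := by field_simp
    _ ≤ a * ⌈1 / a⌉₊ := by gcongr; exact Nat.le_ceil _

/-- Relative stability criterion (Lemma 5.3 of the paper): if a nonnegative
sequence satisfies `c * ∑_{i=1}^∞ x_{k+i} ≤ x_k` for all `k`, then for every
`k` and `ε > 0` there is `n ≤ ⌈1/(c ε)⌉` with `x_{k+n} ≤ ε x_k`. -/
theorem relative_stability_decrease
    (x : ℕ → ℝ) (c : ℝ) (hc : 0 < c)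
    (hx : ∀ k, 0 ≤ x k)
    (hsum : ∀ k, Summable (fun i : ℕ => x (k + (i + 1))))
    (hstab : ∀ k, c * ∑' i : ℕ, x (k + (i + 1)) ≤ x k) :
    ∀ k : ℕ, ∀ ε : ℝ, 0 < ε →
      ∃ n : ℕ, n ≤ ⌈1 / (c * ε)⌉₊ ∧ x (k + n) ≤ ε * x k := by
  intro k ε hε
  by_contra! hlarge
  set N := ⌈1 / (c * ε)⌉₊
  have hcε : 0 < c * ε := mul_pos hc hε
  have hN : 0 < N := Nat.ceil_pos.mpr (by positivity)
  have htail : (N : ℝ) * (ε * x k) < ∑' i, x (k + (i + 1)) := by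
    simpa using card_mul_lt_tsum (hsum k) (fun i ↦ hx _) (nonempty_range_iff.mpr hN.ne')
      fun i hi ↦ hlarge (i + 1) (mem_range.mp hi)
  refine lt_irrefl (x k) ?_
  calc x k ≤ c * ε * N * x k := le_mul_of_one_le_left (hx k) (one_le_mul_natCeil_one_div hcε)
    _ = c * (N * (ε * x k)) := by ring
    _ < c * ∑' i, x (k + (i + 1)) := by gcongr
    _ ≤ x k := hstab k
end

section
/- Let (x_k)_{k∈ℕ} be a sequence of nonnegative real numbers satisfying the relative stability criterion with constant c > 0, and let m ∈ ℕ be such that c·m > 1. Then there exists a strictly increasing sequence of indices (k_l)_{l∈ℕ} with k_0 = 0 and 1 ≤ k_{l+1} − k_l ≤ m for all l, such that the subsequence converges r-linearly: for all l ∈ ℕ, x_{k_l} ≤ ((1/(c·m))^{1/m})^{k_l} · x_0. In particular (since c·m > 1) the rate (1/(c·m))^{1/m} is strictly less than 1, so the subsequence (x_{k_l})_l converges to zero r-linearly with respect to the original index. -/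
/-!
Among the `m` terms following `x k`, the smallest is at most their mean, hence at most
`(∑' i, x (k + (i + 1))) / m ≤ x k / (c * m)`. Jumping from `k` to the index of that term, a jump of
length `j ≤ m` divides `x` by at least `c * m = q⁻¹ ^ m ≥ q⁻¹ ^ j`, where
`q = (1 / (c * m)) ^ (1 / m)`; iterating the jumps from `0` gives the r-linear bound.
-/

theorem exists_lt_mul_le_tsum {f : ℕ → ℝ} (hf : ∀ n, 0 ≤ f n) (hsum : Summable f) {m : ℕ}
    (hm : 0 < m) : ∃ i < m, m * f i ≤ ∑' n, f n := by
  obtain ⟨i, hi, hmin⟩ := Finset.exists_min_image (Finset.range m) f ⟨0, Finset.mem_range.2 hm⟩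
  refine ⟨i, Finset.mem_range.1 hi, ?_⟩
  calc (m : ℝ) * f i = ∑ _ ∈ Finset.range m, f i := by simp
    _ ≤ ∑ n ∈ Finset.range m, f n := Finset.sum_le_sum hmin
    _ ≤ ∑' n, f n := hsum.sum_le_tsum _ fun n _ => hf n

theorem exists_jump_mul_le_of_mul_tsum_le {x : ℕ → ℝ} {c : ℝ} (hc : 0 ≤ c) (hx : ∀ k, 0 ≤ x k)
    {k : ℕ} (hsum : Summable fun i => x (k + (i + 1)))
    (hstab : c * ∑' i, x (k + (i + 1)) ≤ x k) {m : ℕ} (hm : 0 < m) :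
    ∃ j, 1 ≤ j ∧ j ≤ m ∧ c * m * x (k + j) ≤ x k := by
  obtain ⟨i, him, hi⟩ := exists_lt_mul_le_tsum (fun n => hx _) hsum hm
  refine ⟨i + 1, by omega, him, ?_⟩
  calc c * m * x (k + (i + 1)) = c * (m * x (k + (i + 1))) := mul_assoc _ _ _
    _ ≤ c * ∑' n, x (k + (n + 1)) := mul_le_mul_of_nonneg_left hi hc
    _ ≤ x k := hstab

theorem le_pow_mul_of_mul_le {a q y z : ℝ} {j m : ℕ} (hy : 0 ≤ y) (hq0 : 0 ≤ q) (hq1 : q ≤ 1)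
    (hjm : j ≤ m) (hqm : 1 ≤ a * q ^ m) (h : a * y ≤ z) : y ≤ q ^ j * z := by
  have ha : 0 < a := pos_of_mul_pos_left (one_pos.trans_le hqm) (pow_nonneg hq0 m)
  have hz : 0 ≤ z := (mul_nonneg ha.le hy).trans h
  calc y ≤ a * q ^ m * y := le_mul_of_one_le_left hy hqm
    _ = q ^ m * (a * y) := by ring
    _ ≤ q ^ m * z := mul_le_mul_of_nonneg_left h (pow_nonneg hq0 m)
    _ ≤ q ^ j * z := mul_le_mul_of_nonneg_right (pow_le_pow_of_le_one hq0 hq1 hjm) hz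

def jumpSeq (j : ℕ → ℕ) (l : ℕ) : ℕ := (fun k => k + j k)^[l] 0

section jumpSeq

variable {j : ℕ → ℕ}

theorem jumpSeq_succ (l : ℕ) : jumpSeq j (l + 1) = jumpSeq j l + j (jumpSeq j l) :=
  Function.iterate_succ_apply' _ _ _

theorem jumpSeq_succ_sub (l : ℕ) : jumpSeq j (l + 1) - jumpSeq j l = j (jumpSeq j l) := by
  rw [jumpSeq_succ, Nat.add_sub_cancel_left]

theorem jumpSeq_strictMono (hj : ∀ k, 1 ≤ j k) : StrictMono (jumpSeq j) :=
  strictMono_nat_of_lt_succ fun l => by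
    rw [jumpSeq_succ]
    exact Nat.lt_add_of_pos_right (hj _)

theorem le_pow_jumpSeq_mul {x : ℕ → ℝ} {q : ℝ} (hq : 0 ≤ q)
    (hstep : ∀ k, x (k + j k) ≤ q ^ j k * x k) (l : ℕ) :
    x (jumpSeq j l) ≤ q ^ jumpSeq j l * x 0 := by
  induction l with
  | zero => simp [jumpSeq]
  | succ l ih =>
    rw [jumpSeq_succ, pow_add, mul_comm (q ^ _), mul_assoc]
    exact (hstep _).trans (mul_le_mul_of_nonneg_left ih (pow_nonneg hq _))

end jumpSeq

/-- r-linear convergence for subsequences (Lemma 5.2 of the paper): a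
nonnegative sequence satisfying the relative stability criterion with
constant `c > 0` admits, for every `m` with `c·m > 1`, a subsequence
with gaps at most `m` converging r-linearly with rate `(1/(c m))^(1/m) < 1`. -/
theorem relative_stability_rlinear_subsequence
    (x : ℕ → ℝ) (c : ℝ) (hc : 0 < c)
    (hx : ∀ k, 0 ≤ x k)
    (hsum : ∀ k, Summable (fun i : ℕ => x (k + (i + 1))))
    (hstab : ∀ k, c * ∑' i : ℕ, x (k + (i + 1)) ≤ x k)
    (m : ℕ) (hm : 1 < c * (m : ℝ)) :
    (1 / (c * (m : ℝ))) ^ ((1 : ℝ) / (m : ℝ)) < 1 ∧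
    ∃ ks : ℕ → ℕ, ks 0 = 0 ∧ StrictMono ks ∧
      (∀ l : ℕ, 1 ≤ ks (l + 1) - ks l ∧ ks (l + 1) - ks l ≤ m) ∧
      (∀ l : ℕ,
        x (ks l) ≤ ((1 / (c * (m : ℝ))) ^ ((1 : ℝ) / (m : ℝ))) ^ (ks l) * x 0) := by
  have hm0 : 0 < m := Nat.pos_of_ne_zero (by rintro rfl; norm_num at hm)
  have hcm : 0 < c * m := one_pos.trans hm
  set q := (1 / (c * (m : ℝ))) ^ ((1 : ℝ) / (m : ℝ)) with hq
  have hq0 : 0 ≤ q := by positivity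
  have hq1 : q < 1 := Real.rpow_lt_one (by positivity) ((div_lt_one hcm).2 hm) (by positivity)
  have hqm : c * m * q ^ m = 1 := by
    rw [hq, one_div (m : ℝ), Real.rpow_inv_natCast_pow (by positivity) hm0.ne',
      mul_one_div_cancel hcm.ne']
  choose j hj1 hjm hjx using fun k =>
    exists_jump_mul_le_of_mul_tsum_le hc.le hx (hsum k) (hstab k) hm0
  refine ⟨hq1, jumpSeq j, rfl, jumpSeq_strictMono hj1, fun l => ?_,
    le_pow_jumpSeq_mul hq0 fun k => le_pow_mul_of_mul_le (hx _) hq0 hq1.le (hjm k) hqm.ge (hjx k)⟩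
  rw [jumpSeq_succ_sub]
  exact ⟨hj1 _, hjm _⟩
end
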